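/- Let z₁,…,z_M : ℝ^{1+n} → ℂ be C² maps satisfying □₂ z_i = 0 and ∂^μ z_i ∂_μ z_j = 0 for all 1 ≤ i,j ≤ M. Let f_j, g_j : ℂ^M × ℂ̄^M → ℂ be C¹ functions (of the variables z_k and their conjugates z̄_k) satisfying ∂f_j/∂z̄_k + ∂g_k/∂z_j = 0 for all j,k. Then the currents J_μ = Σ_{j=1}^M ( f_j(Z,Z̄) ∂_μ z_j + g_j(Z,Z̄) ∂_μ z̄_j ) are conserved: ∂^μ J_μ = 0. -/

import Mathlib

/-!
Write `∂a·∂b` for the Minkowski pairing `∂^μ a ∂_μ b`. By the product rule,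
`∂^μ J_μ = Σ_j (∂f_j·∂z_j + f_j □z_j + ∂g_j·∂z̄_j + g_j □z̄_j)`, and the `□` terms vanish.
The chain rule in Wirtinger form expands `∂f_j = Σ_k (∂_{z_k} f_j ∂z_k + ∂_{z̄_k} f_j ∂z̄_k)`,
and likewise `∂g_j`. The null condition and its complex conjugate kill the pairings `∂z_k·∂z_j`
and `∂z̄_k·∂z̄_j`; after exchanging `j` and `k` in the `g`-terms, what remains is
`Σ_{j,k} (∂_{z̄_k} f_j + ∂_{z_j} g_k) ∂z̄_k·∂z_j = 0`.
-/

/-- Partial derivative in the μ-th coordinate direction. -/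
noncomputable def pd {n : ℕ} (μ : Fin (n+1)) (u : (Fin (n+1) → ℝ) → ℂ) :
    (Fin (n+1) → ℝ) → ℂ :=
  fun x => fderiv ℝ u x (Pi.single μ 1)

/-- The d'Alembertian □₂ = ∂₀² − Σⱼ ∂ⱼ² on ℝ^{1+n}. -/
noncomputable def box2 {n : ℕ} (u : (Fin (n+1) → ℝ) → ℂ) :
    (Fin (n+1) → ℝ) → ℂ :=
  fun x => pd 0 (pd 0 u) x - ∑ j : Fin n, pd j.succ (pd j.succ u) x

/-- Wirtinger derivative ∂/∂z_k of a function F : ℂ^M → ℂ (viewed as a real-smooth map). -/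
noncomputable def wD {M : ℕ} (k : Fin M) (F : (Fin M → ℂ) → ℂ) : (Fin M → ℂ) → ℂ :=
  fun Z => (fderiv ℝ F Z (Pi.single k 1) - Complex.I * fderiv ℝ F Z (Pi.single k Complex.I)) / 2

/-- Wirtinger derivative ∂/∂z̄_k of a function F : ℂ^M → ℂ. -/
noncomputable def wDbar {M : ℕ} (k : Fin M) (F : (Fin M → ℂ) → ℂ) : (Fin M → ℂ) → ℂ :=
  fun Z => (fderiv ℝ F Z (Pi.single k 1) + Complex.I * fderiv ℝ F Z (Pi.single k Complex.I)) / 2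

open Complex Finset

section Spacetime

variable {n : ℕ}

def minkowski (n : ℕ) : LinearMap.BilinForm ℂ (Fin (n+1) → ℂ) :=
  LinearMap.mk₂ ℂ (fun a b => a 0 * b 0 - ∑ l : Fin n, a l.succ * b l.succ)
    (fun a a' b => by simp only [Pi.add_apply, add_mul, sum_add_distrib]; ring)
    (fun c a b => by simp only [Pi.smul_apply, smul_eq_mul, mul_assoc, ← mul_sum, mul_sub])
    (fun a b b' => by simp only [Pi.add_apply, mul_add, sum_add_distrib]; ring)
    (fun c a b => by
      simp only [Pi.smul_apply, smul_eq_mul, mul_left_comm _ c, ← mul_sum, mul_sub])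

lemma minkowski_apply (a b : Fin (n+1) → ℂ) :
    minkowski n a b = a 0 * b 0 - ∑ l : Fin n, a l.succ * b l.succ := rfl

lemma minkowski_comm (a b : Fin (n+1) → ℂ) : minkowski n a b = minkowski n b a := by
  simp only [minkowski_apply, mul_comm]

lemma minkowski_star (a b : Fin (n+1) → ℂ) :
    minkowski n (star a) (star b) = star (minkowski n a b) := by
  simp only [minkowski_apply, Pi.star_apply, star_sub, star_sum, star_mul']

noncomputable def spacetimeGrad (u : (Fin (n+1) → ℝ) → ℂ) (x : Fin (n+1) → ℝ) :
    Fin (n+1) → ℂ :=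
  fun μ => pd μ u x

noncomputable def spacetimeDiv (V : Fin (n+1) → (Fin (n+1) → ℝ) → ℂ)
    (x : Fin (n+1) → ℝ) : ℂ :=
  pd 0 (V 0) x - ∑ l : Fin n, pd l.succ (V l.succ) x

lemma ContDiff.pd {m : WithTop ℕ∞} {u : (Fin (n+1) → ℝ) → ℂ} (hu : ContDiff ℝ (m + 1) u)
    (μ : Fin (n+1)) : ContDiff ℝ m (pd μ u) :=
  (hu.fderiv_right le_rfl).clm_apply contDiff_const

lemma pd_star (μ : Fin (n+1)) (u : (Fin (n+1) → ℝ) → ℂ) :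
    pd μ (fun y => star (u y)) = fun y => star (pd μ u y) := by
  funext y
  simp only [pd, fderiv_star]
  rfl

lemma box2_star (u : (Fin (n+1) → ℝ) → ℂ) (x : Fin (n+1) → ℝ) :
    box2 (fun y => star (u y)) x = star (box2 u x) := by
  simp only [box2, pd_star, star_sub, star_sum]

lemma spacetimeGrad_star (u : (Fin (n+1) → ℝ) → ℂ) (x : Fin (n+1) → ℝ) :
    spacetimeGrad (fun y => star (u y)) x = star (spacetimeGrad u x) := by
  funext μ
  simp only [spacetimeGrad, pd_star, Pi.star_apply]

lemma pd_add (μ : Fin (n+1)) {u v : (Fin (n+1) → ℝ) → ℂ} {x : Fin (n+1) → ℝ}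
    (hu : DifferentiableAt ℝ u x) (hv : DifferentiableAt ℝ v x) :
    pd μ (fun y => u y + v y) x = pd μ u x + pd μ v x := by
  simp [pd, fderiv_fun_add hu hv]

lemma pd_sum {ι : Type*} (s : Finset ι) (μ : Fin (n+1)) {u : ι → (Fin (n+1) → ℝ) → ℂ}
    {x : Fin (n+1) → ℝ} (hu : ∀ i ∈ s, DifferentiableAt ℝ (u i) x) :
    pd μ (fun y => ∑ i ∈ s, u i y) x = ∑ i ∈ s, pd μ (u i) x := by
  simp [pd, fderiv_fun_sum hu]

lemma pd_mul (μ : Fin (n+1)) {u v : (Fin (n+1) → ℝ) → ℂ} {x : Fin (n+1) → ℝ}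
    (hu : DifferentiableAt ℝ u x) (hv : DifferentiableAt ℝ v x) :
    pd μ (fun y => u y * v y) x = pd μ u x * v x + u x * pd μ v x := by
  simp only [pd, fderiv_fun_mul hu hv, add_apply, smul_apply, smul_eq_mul]
  ring

lemma spacetimeDiv_add {V W : Fin (n+1) → (Fin (n+1) → ℝ) → ℂ} {x : Fin (n+1) → ℝ}
    (hV : ∀ μ, DifferentiableAt ℝ (V μ) x) (hW : ∀ μ, DifferentiableAt ℝ (W μ) x) :
    spacetimeDiv (fun μ y => V μ y + W μ y) x = spacetimeDiv V x + spacetimeDiv W x := by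
  simp only [spacetimeDiv, pd_add _ (hV _) (hW _), sum_add_distrib]
  ring

lemma spacetimeDiv_sum {ι : Type*} (s : Finset ι)
    {V : ι → Fin (n+1) → (Fin (n+1) → ℝ) → ℂ} {x : Fin (n+1) → ℝ}
    (hV : ∀ i ∈ s, ∀ μ, DifferentiableAt ℝ (V i μ) x) :
    spacetimeDiv (fun μ y => ∑ i ∈ s, V i μ y) x = ∑ i ∈ s, spacetimeDiv (V i) x := by
  simp only [spacetimeDiv, pd_sum s _ fun i hi => hV i hi _, sum_sub_distrib]
  rw [sum_comm]

lemma spacetimeDiv_mul_grad {φ u : (Fin (n+1) → ℝ) → ℂ} {x : Fin (n+1) → ℝ}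
    (hφ : DifferentiableAt ℝ φ x) (hu : ∀ μ, DifferentiableAt ℝ (pd μ u) x) :
    spacetimeDiv (fun μ y => φ y * pd μ u y) x
      = minkowski n (spacetimeGrad φ x) (spacetimeGrad u x) + φ x * box2 u x := by
  simp only [spacetimeDiv, pd_mul _ hφ (hu _), minkowski_apply, spacetimeGrad, box2,
    sum_add_distrib, mul_sub, mul_sum]
  ring

lemma spacetimeDiv_mul_grad_add_mul_grad_star {φ ψ u : (Fin (n+1) → ℝ) → ℂ}
    {x : Fin (n+1) → ℝ} (hφ : DifferentiableAt ℝ φ x) (hψ : DifferentiableAt ℝ ψ x)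
    (hu : ∀ μ, DifferentiableAt ℝ (pd μ u) x) (hbox : box2 u x = 0) :
    spacetimeDiv (fun μ y => φ y * pd μ u y + ψ y * star (pd μ u y)) x
      = minkowski n (spacetimeGrad φ x) (spacetimeGrad u x)
        + minkowski n (spacetimeGrad ψ x) (star (spacetimeGrad u x)) := by
  have hstar : ∀ μ y, star (pd μ u y) = pd μ (fun y => star (u y)) y := fun μ y =>
    (congrFun (pd_star μ u) y).symm
  have hu_star : ∀ μ, DifferentiableAt ℝ (pd μ (fun y => star (u y))) x := fun μ => by
    simpa only [pd_star] using (hu μ).star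
  simp only [hstar]
  rw [spacetimeDiv_add (fun μ => hφ.fun_mul (hu μ)) (fun μ => hψ.fun_mul (hu_star μ)),
    spacetimeDiv_mul_grad hφ hu, spacetimeDiv_mul_grad hψ hu_star, box2_star, hbox,
    spacetimeGrad_star]
  simp only [star_zero, mul_zero, add_zero]

end Spacetime

lemma ContinuousLinearMap.apply_eq_sum_wirtinger {ι : Type*} [Fintype ι] [DecidableEq ι]
    (L : (ι → ℂ) →L[ℝ] ℂ) (w : ι → ℂ) :
    L w = ∑ k, ((L (Pi.single k 1) - I * L (Pi.single k I)) / 2 * w k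
      + (L (Pi.single k 1) + I * L (Pi.single k I)) / 2 * star (w k)) := by
  conv_lhs => rw [← univ_sum_single w, map_sum]
  refine sum_congr rfl fun k _ => ?_
  have hsingle : (Pi.single k (w k) : ι → ℂ)
      = (w k).re • (Pi.single k 1 : ι → ℂ) + (w k).im • (Pi.single k I : ι → ℂ) := by
    rw [← Pi.single_smul, ← Pi.single_smul, ← Pi.single_add, real_smul, real_smul, mul_one,
      re_add_im]
  have hstar : star (w k) = (w k).re - (w k).im * I := by simp [Complex.ext_iff]
  rw [hsingle, map_add, map_smul, map_smul, real_smul, real_smul, hstar]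
  linear_combination ((L (Pi.single k 1) - I * L (Pi.single k I)) / 2) * re_add_im (w k)
    + ((w k).im * L (Pi.single k I)) * I_sq

lemma spacetimeGrad_comp_wirtinger {n M : ℕ} {F : (Fin M → ℂ) → ℂ}
    {z : Fin M → (Fin (n+1) → ℝ) → ℂ} {x : Fin (n+1) → ℝ}
    (hF : DifferentiableAt ℝ F (fun i => z i x)) (hz : ∀ i, DifferentiableAt ℝ (z i) x) :
    spacetimeGrad (fun y => F (fun i => z i y)) x
      = ∑ k, (wD k F (fun i => z i x) • spacetimeGrad (z k) x
          + wDbar k F (fun i => z i x) • star (spacetimeGrad (z k) x)) := by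
  funext μ
  have hZ : DifferentiableAt ℝ (fun y i => z i y) x := differentiableAt_pi.2 hz
  rw [spacetimeGrad, pd, fderiv_fun_comp x hF hZ, ContinuousLinearMap.comp_apply,
    ContinuousLinearMap.apply_eq_sum_wirtinger, fderiv_pi hz]
  simp only [Finset.sum_apply, Pi.add_apply, Pi.smul_apply, Pi.star_apply, smul_eq_mul]
  rfl

lemma sum_minkowski_wirtinger_eq_zero {n M : ℕ} (p : Fin M → Fin (n+1) → ℂ)
    (hnull : ∀ i j, minkowski n (p i) (p j) = 0) (a b c d : Fin M → Fin M → ℂ)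
    (hbc : ∀ j k, b j k + c k j = 0) :
    ∑ j, (minkowski n (∑ k, (a j k • p k + b j k • star (p k))) (p j)
      + minkowski n (∑ k, (c j k • p k + d j k • star (p k))) (star (p j))) = 0 := by
  have hnull_star : ∀ i j, minkowski n (star (p i)) (star (p j)) = 0 := fun i j => by
    rw [minkowski_star, hnull, star_zero]
  simp only [map_sum, map_add, map_smul, LinearMap.sum_apply,
    LinearMap.add_apply, LinearMap.smul_apply, smul_eq_mul, hnull, hnull_star, mul_zero,
    zero_add, add_zero]
  simp only [minkowski_comm (p _) (star (p _)), sum_add_distrib]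
  rw [sum_comm (f := fun j k => c j k * _), ← sum_add_distrib]
  refine sum_eq_zero fun j _ => ?_
  rw [← sum_add_distrib]
  exact sum_eq_zero fun k _ => by rw [← add_mul, hbc, zero_mul]

theorem stmt2 {n M : ℕ} (z : Fin M → (Fin (n+1) → ℝ) → ℂ)
    (hz : ∀ i, ContDiff ℝ 2 (z i))
    (hwave : ∀ i x, box2 (z i) x = 0)
    (hnull : ∀ i j x,
      pd 0 (z i) x * pd 0 (z j) x
        - ∑ l : Fin n, pd l.succ (z i) x * pd l.succ (z j) x = 0)
    (f g : Fin M → (Fin M → ℂ) → ℂ)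
    (hf : ∀ j, ContDiff ℝ 1 (f j)) (hg : ∀ j, ContDiff ℝ 1 (g j))
    (hcond : ∀ j k Z, wDbar k (f j) Z + wD j (g k) Z = 0)
    (J : Fin (n+1) → (Fin (n+1) → ℝ) → ℂ)
    (hJ : J = fun μ x => ∑ j : Fin M,
      (f j (fun i => z i x) * pd μ (z j) x
        + g j (fun i => z i x) * pd μ (fun y => starRingEnd ℂ (z j y)) x)) :
    ∀ x, pd 0 (J 0) x - ∑ l : Fin n, pd l.succ (J l.succ) x = 0 := by
  intro x
  suffices spacetimeDiv J x = 0 from this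
  subst hJ
  have hz1 : ∀ i, Differentiable ℝ (z i) := fun i => (hz i).differentiable two_ne_zero
  have hpd : ∀ i μ, Differentiable ℝ (pd μ (z i)) := fun i μ =>
    ((hz i).pd (m := 1) μ).differentiable one_ne_zero
  have hcomp : ∀ F : (Fin M → ℂ) → ℂ, ContDiff ℝ 1 F →
      Differentiable ℝ (fun y => F (fun i => z i y)) :=
    fun F hF => (hF.differentiable one_ne_zero).comp (differentiable_pi.2 hz1)
  simp only [starRingEnd_apply, pd_star]
  rw [spacetimeDiv_sum _ fun j _ μ =>
    ((hcomp _ (hf j) x).fun_mul (hpd j μ x)).fun_add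
      ((hcomp _ (hg j) x).fun_mul (hpd j μ x).star)]
  simp only [spacetimeDiv_mul_grad_add_mul_grad_star (hcomp _ (hf _) x) (hcomp _ (hg _) x)
      (fun μ => hpd _ μ x) (hwave _ x),
    spacetimeGrad_comp_wirtinger ((hf _).differentiable one_ne_zero _) fun i => hz1 i x,
    spacetimeGrad_comp_wirtinger ((hg _).differentiable one_ne_zero _) fun i => hz1 i x]
  exact sum_minkowski_wirtinger_eq_zero _ (fun i j => hnull i j x) _ _ _ _ fun j k => hcond j k _
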